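/- arXiv:2605.19185 — 3 statements merged into one kernel-verified Lean document; each statement's English description precedes it below -/
import Mathlib

section
/- Under the setup of the local action-ordering lemma, consider the deterministic greedy rollout s_0, s_1, ... defined by s_{t+1} ∈ argmin_{y ~ s_t}[w(s_t,y) + V̂(y)] (with any fixed tie-breaking), with g absorbing. If ε(s_t) < Δ*(s_t)/2 at every non-goal state s_t visited, then s_{t+1} ∈ A*(s_t) at every step, V*(s_t) strictly decreases by w(s_t, s_{t+1}) at each step, and the rollout reaches g in at most ⌈V*(s_0)/w_min⌉ steps, where w_min is the minimum edge weight. -/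
/-- Planner-admissibility certificate.
Setup as in the local action-ordering lemma: finite graph with neighbor finsets
`N`, positive edge weights `w` bounded below by the minimum edge weight `wmin`,
goal `g`, true shortest-path cost-to-go `Vstar` (Bellman identity, `Vstar g = 0`),
surrogate `Vhat`.  `seq` is the deterministic greedy rollout: `seq (t+1)` is a
minimizer of `y ↦ w (seq t) y + Vhat y` over the neighbors of `seq t` when
`seq t ≠ g`, and `g` is absorbing.  Under the local half-gap condition
`ε(s_t) < Δ*(s_t)/2` (unfolded per suboptimal neighbor) at every non-goal state
visited, every step picks a Bellman-optimal neighbor, `Vstar` strictly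
decreases by the traversed edge weight, and the rollout reaches `g` within
`⌈Vstar (seq 0) / wmin⌉` steps. -/
theorem stmt1_planner_admissibility
    {V : Type*} [Fintype V] [DecidableEq V]
    (N : V → Finset V) (hsym : ∀ x y, y ∈ N x ↔ x ∈ N y)
    (w : V → V → ℝ)
    (wmin : ℝ) (hwmin : 0 < wmin) (hwlb : ∀ x y, y ∈ N x → wmin ≤ w x y)
    (g : V) (Vstar Vhat : V → ℝ)
    (hVg : Vstar g = 0)
    (hNne : ∀ v : V, (N v).Nonempty)
    (hBellman : ∀ v : V, v ≠ g →
      Vstar v = (N v).inf' (hNne v) (fun y => w v y + Vstar y))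
    (Astar : V → Finset V)
    (hAstar : ∀ s y, y ∈ Astar s ↔ y ∈ N s ∧
      ∀ z ∈ N s, w s y + Vstar y ≤ w s z + Vstar z)
    (seq : ℕ → V)
    -- greedy rollout with absorbing goal
    (habs : ∀ t, seq t = g → seq (t + 1) = g)
    (hgreedy : ∀ t, seq t ≠ g →
      seq (t + 1) ∈ N (seq t) ∧
      ∀ z ∈ N (seq t), w (seq t) (seq (t + 1)) + Vhat (seq (t + 1)) ≤ w (seq t) z + Vhat z)
    -- ε(s_t) < Δ*(s_t)/2 at every non-goal visited state
    (hgap : ∀ t, seq t ≠ g → ∀ b ∈ N (seq t), b ∉ Astar (seq t) →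
      (N (seq t)).sup' (hNne (seq t)) (fun y => |Vhat y - Vstar y|)
        < ((w (seq t) b + Vstar b)
            - (N (seq t)).inf' (hNne (seq t)) (fun y => w (seq t) y + Vstar y)) / 2) :
    (∀ t, seq t ≠ g → seq (t + 1) ∈ Astar (seq t)) ∧
    (∀ t, seq t ≠ g →
      Vstar (seq (t + 1)) = Vstar (seq t) - w (seq t) (seq (t + 1))) ∧
    (∃ t : ℕ, t ≤ ⌈Vstar (seq 0) / wmin⌉₊ ∧ seq t = g) := by

  -- Vstar is nonnegative everywhere
  have hVnonneg : ∀ v, 0 ≤ Vstar v := by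
    obtain ⟨v0, -, hv0⟩ := Finset.exists_min_image (Finset.univ : Finset V) Vstar
      ⟨g, Finset.mem_univ g⟩
    have hmin : ∀ v, Vstar v0 ≤ Vstar v := fun v => hv0 v (Finset.mem_univ v)
    by_cases h0 : v0 = g
    · intro v; have := hmin v; rw [h0, hVg] at this; linarith
    · exfalso
      obtain ⟨y, hy, hye⟩ := Finset.exists_mem_eq_inf' (hNne v0) (fun y => w v0 y + Vstar y)
      have hB := hBellman v0 h0
      rw [hye] at hB
      have h1 := hwlb v0 y hy
      have h2 := hmin y
      linarith
  -- every greedy step is Bellman-optimal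
  have hstep : ∀ t, seq t ≠ g → seq (t + 1) ∈ Astar (seq t) := by
    intro t ht
    by_contra hb
    obtain ⟨hmem, hgr⟩ := hgreedy t ht
    have hg2 := hgap t ht _ hmem hb
    set s := seq t
    set b := seq (t + 1)
    obtain ⟨a, ha, hae⟩ := Finset.exists_mem_eq_inf' (hNne s) (fun y => w s y + Vstar y)
    have hEb := Finset.le_sup' (fun y => |Vhat y - Vstar y|) hmem
    have hEa := Finset.le_sup' (fun y => |Vhat y - Vstar y|) ha
    have hb1 := abs_le.mp (le_refl |Vhat b - Vstar b|) |>.1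
    have hb2 := abs_le.mp (le_refl |Vhat b - Vstar b|) |>.2
    have ha1 := abs_le.mp (le_refl |Vhat a - Vstar a|) |>.1
    have ha2 := abs_le.mp (le_refl |Vhat a - Vstar a|) |>.2
    have hgra := hgr a ha
    rw [hae] at hg2
    linarith
  refine ⟨hstep, ?_, ?_⟩
  · -- strict decrease
    intro t ht
    have hA := (hAstar _ _).mp (hstep t ht)
    obtain ⟨hmem, hopt⟩ := hA
    have hB := hBellman _ ht
    obtain ⟨a, ha, hae⟩ := Finset.exists_mem_eq_inf' (hNne (seq t))
      (fun y => w (seq t) y + Vstar y)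
    have h1 : (N (seq t)).inf' (hNne (seq t)) (fun y => w (seq t) y + Vstar y)
        = w (seq t) (seq (t + 1)) + Vstar (seq (t + 1)) := by
      apply le_antisymm
      · exact Finset.inf'_le _ hmem
      · rw [hae]; exact hopt a ha
    rw [h1] at hB; linarith
  · -- termination
    have hdec : ∀ t, seq t ≠ g →
        Vstar (seq (t + 1)) = Vstar (seq t) - w (seq t) (seq (t + 1)) := by
      intro t ht
      have hA := (hAstar _ _).mp (hstep t ht)
      obtain ⟨hmem, hopt⟩ := hA
      have hB := hBellman _ ht
      obtain ⟨a, ha, hae⟩ := Finset.exists_mem_eq_inf' (hNne (seq t))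
        (fun y => w (seq t) y + Vstar y)
      have h1 : (N (seq t)).inf' (hNne (seq t)) (fun y => w (seq t) y + Vstar y)
          = w (seq t) (seq (t + 1)) + Vstar (seq (t + 1)) := by
        apply le_antisymm
        · exact Finset.inf'_le _ hmem
        · rw [hae]; exact hopt a ha
      rw [h1] at hB; linarith
    set K := ⌈Vstar (seq 0) / wmin⌉₊ with hK
    by_contra hno
    push_neg at hno
    have hng : ∀ t ≤ K, seq t ≠ g := fun t ht => hno t ht
    have hsum : ∀ n, n ≤ K → Vstar (seq n) + n * wmin ≤ Vstar (seq 0) := by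
      intro n
      induction n with
      | zero => intro _; simp
      | succ m ih =>
        intro hm
        have hm' : m ≤ K := Nat.le_of_succ_le hm
        have hmg := hng m hm'
        have hd := hdec m hmg
        have hw := hwlb _ _ (hgreedy m hmg).1
        have := ih hm'
        push_cast
        push_cast at this
        linarith
    have hKg := hng K le_rfl
    have hdK := hdec K hKg
    have hwK := hwlb _ _ (hgreedy K hKg).1
    have hVK1 := hVnonneg (seq (K + 1))
    have hVK : wmin ≤ Vstar (seq K) := by linarith
    have hceil : Vstar (seq 0) / wmin ≤ (K : ℝ) := Nat.le_ceil _
    have hle : Vstar (seq 0) ≤ (K : ℝ) * wmin := by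
      rw [div_le_iff₀ hwmin] at hceil; linarith
    have := hsum K le_rfl
    linarith
end

section
/- Let u : V → ℝ satisfy the midrange (AMLE) identity u(x) = (min_{y~x}u(y) + max_{y~x}u(y))/2 at every interior vertex of a finite graph G with boundary ∂. Define ũ on the uniform k-subdivision G^(k) by ũ = λu at original vertices (λ > 0) and linear interpolation along subdivided edges. Then ũ satisfies the midrange identity at every interior vertex of G^(k). -/
/-!
A nondecreasing affine map commutes with `min` and `max`, hence with the midrange. Along a
subdivided edge `ũ` is affine in the path position, so the midrange at position `j` of the
values at `j ± 1` is their average, the value at `j`. At an original vertex `v` the first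
inserted values are `λ u(v) (1 - 1/k) + (λ/k) u(z)`, an affine image of the neighbor values
with slope `λ/k ≥ 0`, so the midrange identity for `u` at `v` transfers.
-/

theorem Finset.inf'_add_sup'_affine {ι K : Type*} [Field K] [LinearOrder K] [IsStrictOrderedRing K]
    {s : Finset ι} (hs : s.Nonempty) (f : ι → K) (a : K) {c : K} (hc : 0 ≤ c) :
    s.inf' hs (fun i => a + c * f i) + s.sup' hs (fun i => a + c * f i) =
      2 * a + c * (s.inf' hs f + s.sup' hs f) := by
  have hmono : Monotone (fun x : K => a + c * x) := fun x y hxy => by dsimp only; gcongr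
  rw [← Function.comp_def (fun x => a + c * x) f,
    ← apply_inf'_eq_inf'_comp hs _ hmono.map_inf, ← apply_sup'_eq_sup'_comp hs _ hmono.map_sup]
  ring

theorem stmt14_amle_subdivision_equivariance_general
    {V : Type*}
    (N : V → Finset V)
    (B : Finset V)
    (hNne : ∀ x : V, x ∉ B → (N x).Nonempty)
    (u : V → ℝ)
    (hmid : ∀ x : V, (hx : x ∉ B) →
      u x = ((N x).inf' (hNne x hx) u + (N x).sup' (hNne x hx) u) / 2)
    (k : ℕ)
    (lam : ℝ) (hlam : 0 < lam)
    (interp : V → V → ℕ → ℝ)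
    (hinterp : ∀ v z : V, ∀ j : ℕ,
      interp v z j = lam * u v + ((j : ℝ) / k) * (lam * u z - lam * u v)) :
    -- (a) midrange identity at every inserted vertex
    (∀ v z : V, z ∈ N v → ∀ j : ℕ, 1 ≤ j → j ≤ k - 1 →
      interp v z j =
        (min (interp v z (j - 1)) (interp v z (j + 1))
          + max (interp v z (j - 1)) (interp v z (j + 1))) / 2) ∧
    -- (b) midrange identity at every original interior vertex
    (∀ v : V, (hv : v ∉ B) →
      lam * u v =
        ((N v).inf' (hNne v hv) (fun z => interp v z 1)
          + (N v).sup' (hNne v hv) (fun z => interp v z 1)) / 2) := by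
  refine ⟨fun v z _ j hj _ => ?_, fun v hv => ?_⟩
  · obtain ⟨m, rfl⟩ : ∃ m, j = m + 1 := ⟨j - 1, by omega⟩
    rw [min_add_max, Nat.add_sub_cancel, hinterp, hinterp, hinterp]
    push_cast
    ring
  · have hfirst : (fun z => interp v z 1) = fun z => lam * u v * (1 - 1 / k) + lam / k * u z := by
      funext z
      rw [hinterp]
      ring
    rw [hfirst, Finset.inf'_add_sup'_affine _ _ _ (by positivity)]
    linear_combination (lam / k) * hmid v hv

/-- AMLE midrange equation on the uniform k-subdivision.
`u` satisfies the midrange identity at every interior vertex of `G` (boundary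
`B`, nonempty interior neighbor sets).  On the uniform `k`-subdivision, the
function `ũ` equals `λ·u` at original vertices with linear interpolation
along subdivided edges: the `j`-th inserted vertex on the edge from `v` to
`z` carries `interp v z j = λ u v + (j/k)(λ u z − λ u v)`.  Then `ũ`
satisfies the midrange identity at every interior vertex of `G^(k)`:
(a) at each inserted vertex, whose two neighbors sit at path positions
`j−1` and `j+1`, the midrange `(min + max)/2` of the neighbor values equals
its own value; (b) at each original interior vertex `v`, whose
`G^(k)`-neighbors are the first inserted vertices along its original edges,
the midrange of the neighbor values equals `λ u v`. -/
theorem stmt14_amle_subdivision_equivariance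
    {V : Type*} [Fintype V] [DecidableEq V]
    (N : V → Finset V) (hsym : ∀ x y, y ∈ N x ↔ x ∈ N y)
    (B : Finset V)
    (hNne : ∀ x : V, x ∉ B → (N x).Nonempty)
    (u : V → ℝ)
    (hmid : ∀ x : V, (hx : x ∉ B) →
      u x = ((N x).inf' (hNne x hx) u + (N x).sup' (hNne x hx) u) / 2)
    (k : ℕ) (hk : 1 ≤ k)
    (lam : ℝ) (hlam : 0 < lam)
    (interp : V → V → ℕ → ℝ)
    (hinterp : ∀ v z : V, ∀ j : ℕ,
      interp v z j = lam * u v + ((j : ℝ) / k) * (lam * u z - lam * u v)) :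
    -- (a) midrange identity at every inserted vertex
    (∀ v z : V, z ∈ N v → ∀ j : ℕ, 1 ≤ j → j ≤ k - 1 →
      interp v z j =
        (min (interp v z (j - 1)) (interp v z (j + 1))
          + max (interp v z (j - 1)) (interp v z (j + 1))) / 2) ∧
    -- (b) midrange identity at every original interior vertex
    (∀ v : V, (hv : v ∉ B) →
      lam * u v =
        ((N v).inf' (hNne v hv) (fun z => interp v z 1)
          + (N v).sup' (hNne v hv) (fun z => interp v z 1)) / 2) :=
  stmt14_amle_subdivision_equivariance_general N B hNne u hmid k lam hlam interp hinterp
end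

section
/- On the seven-node graph G_7 with vertices {0,1,3,4,5,6,7}, edges {0,3},{0,5},{5,1},{1,4},{3,4},{3,6},{6,7},{4,7}, goal g = 0, boundary Γ = {0,7}, and labels Y(0)=0, Y(7)=3: the unique harmonic extension û_2 (harmonic on V∖Γ, pinned on Γ) satisfies û_2(1) = 36/29 and û_2(3) = 39/29; hence at decision state s = 4, whose true Bellman-optimal neighbor set is {3}, harmonic-greedy (unit edge costs) strictly prefers the suboptimal neighbor 1 over 3. -/
/-- Harmonic inversion on the seven-node graph `G₇`.
`G₇` has vertices `{0,1,3,4,5,6,7}` (modeled inside `Fin 8`; vertex `2` is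
unused) and edges `{0,3},{0,5},{5,1},{1,4},{3,4},{3,6},{6,7},{4,7}`, so the
neighbor sets are `N(0)={3,5}`, `N(1)={4,5}`, `N(3)={0,4,6}`,
`N(4)={1,3,7}`, `N(5)={0,1}`, `N(6)={3,7}`, `N(7)={4,6}`.  If `u` is pinned
on the boundary `Γ = {0,7}` with labels `u 0 = 0`, `u 7 = 3` and satisfies
the graph harmonic equation `Σ_{y~x}(u y − u x) = 0` at every interior
vertex `x ∈ {1,3,4,5,6}`, then `u 1 = 36/29` and `u 3 = 39/29`; hence at the
decision state `s = 4` (true Bellman-optimal neighbor set `{3}`, since the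
unit-cost shortest-path cost-to-go values are `V*(3) = 1 < V*(1) = 2` and
`V*(7) = 3`), harmonic-greedy with unit edge costs strictly prefers the
suboptimal neighbor `1` over `3` (and over `7`). -/
theorem stmt16_g7_harmonic_inversion
    (u : Fin 8 → ℝ)
    (hb0 : u 0 = 0) (hb7 : u 7 = 3)
    (h1 : (u 4 - u 1) + (u 5 - u 1) = 0)
    (h3 : (u 0 - u 3) + (u 4 - u 3) + (u 6 - u 3) = 0)
    (h4 : (u 1 - u 4) + (u 3 - u 4) + (u 7 - u 4) = 0)
    (h5 : (u 0 - u 5) + (u 1 - u 5) = 0)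
    (h6 : (u 3 - u 6) + (u 7 - u 6) = 0) :
    u 1 = 36 / 29 ∧ u 3 = 39 / 29 ∧
    (1 + u 1 < 1 + u 3) ∧ (1 + u 1 < 1 + u 7) := by
  refine ⟨by linarith, by linarith, by linarith, by linarith⟩
end
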